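/- Let (β_k)_{k≥1} be real numbers and (a^{(m)})_{m≥0} a compatible family of 1-forms on the diamond hierarchical graphs, with Dirichlet magnetic operators D_m. If m ≥ 2 and cos 2β_m ≠ 0, then the spectrum (set of eigenvalues) of D_m equals {1} ∪ {z ∈ ℂ : R_m(z) is an eigenvalue of D_{m−1}}; moreover the spectrum of D_1 is {1}. -/

import Mathlib

open Complex

abbrev DEdge (m : ℕ) : Type := Fin m → Fin 4

def DVtx : ℕ → Type
  | 0 => Bool
  | m + 1 => DVtx m ⊕ (DEdge m × Bool)

instance DVtx.instFintype : (m : ℕ) → Fintype (DVtx m)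
  | 0 => inferInstanceAs (Fintype Bool)
  | m + 1 =>
      letI := DVtx.instFintype m
      inferInstanceAs (Fintype (DVtx m ⊕ (DEdge m × Bool)))

instance DVtx.instDecidableEq : (m : ℕ) → DecidableEq (DVtx m)
  | 0 => inferInstanceAs (DecidableEq Bool)
  | m + 1 =>
      letI := DVtx.instDecidableEq m
      inferInstanceAs (DecidableEq (DVtx m ⊕ (DEdge m × Bool)))

/-- The inclusion of scale-`m` vertices into scale-`m+1` vertices. -/
def oldV {m : ℕ} (x : DVtx m) : DVtx (m + 1) := Sum.inl x

/-- The new vertices at scale `m+1`: each scale-`m` edge gives two new vertices. -/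
def newV {m : ℕ} (p : DEdge m × Bool) : DVtx (m + 1) := Sum.inr p

/-- Endpoints (source, target) of each canonically directed edge. Each edge `w` of `G_m`
with endpoints `x = src w`, `y = tgt w` is replaced in `G_{m+1}` by the 4-cycle
`x–u–y–v–x` with `u = (w,false)`, `v = (w,true)`, its four edges directed
`x→u`, `u→y`, `y→v`, `v→x`. -/
def dEnds : (m : ℕ) → DEdge m → DVtx m × DVtx m
  | 0, _ => (false, true)
  | m + 1, w =>
      let p : DEdge m := fun i => w i.castSucc
      let x := (dEnds m p).1
      let y := (dEnds m p).2
      if w (Fin.last m) = 0 then (oldV x, newV (p, false))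
      else if w (Fin.last m) = 1 then (newV (p, false), oldV y)
      else if w (Fin.last m) = 2 then (oldV y, newV (p, true))
      else (newV (p, true), oldV x)

def dsrc (m : ℕ) (e : DEdge m) : DVtx m := (dEnds m e).1
def dtgt (m : ℕ) (e : DEdge m) : DVtx m := (dEnds m e).2

/-- Degree of a vertex in `G_m`. -/
def ddeg (m : ℕ) (x : DVtx m) : ℕ :=
  (Finset.univ.filter fun e : DEdge m => dsrc m e = x).card +
  (Finset.univ.filter fun e : DEdge m => dtgt m e = x).card

/-- The magnetic operator `M^a_m` associated to a 1-form `a` (recorded on the canonical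
orientations of the edges; the reversed edge carries `-a e`). -/
noncomputable def magOp (m : ℕ) (a : DEdge m → ℝ) (f : DVtx m → ℂ) (x : DVtx m) : ℂ :=
  (ddeg m x : ℂ)⁻¹ *
    ((∑ e : DEdge m, if dsrc m e = x then f x - Complex.exp (Complex.I * a e) * f (dtgt m e) else 0) +
     (∑ e : DEdge m, if dtgt m e = x then f x - Complex.exp (-(Complex.I * a e)) * f (dsrc m e) else 0))

/-- The two original vertices `V_0` viewed inside `V_m`. -/
def base : (m : ℕ) → Bool → DVtx m
  | 0, b => b
  | m + 1, b => oldV (base m b)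

/-- Matrix of the magnetic operator `M^a_m`. -/
noncomputable def magMat (m : ℕ) (a : DEdge m → ℝ) : Matrix (DVtx m) (DVtx m) ℂ :=
  Matrix.of fun x y => magOp m a (fun v => if v = y then 1 else 0) x

/-- The Dirichlet magnetic operator: submatrix indexed by `V_m \ V_0`. -/
noncomputable def dirMat (m : ℕ) (a : DEdge m → ℝ) :
    Matrix {x : DVtx m // ∀ b, x ≠ base m b} {x : DVtx m // ∀ b, x ≠ base m b} ℂ :=
  (magMat m a).submatrix Subtype.val Subtype.val

/-- Flux of a 1-form around the scale-`(m+1)` cell replacing edge `w` of `G_m`. -/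
noncomputable def cellFlux {m : ℕ} (a : DEdge (m + 1) → ℝ) (w : DEdge m) : ℝ :=
  a (Fin.snoc w 0) + a (Fin.snoc w 1) + a (Fin.snoc w 2) + a (Fin.snoc w 3)

/-- The trace of a 1-form on `G_{m+1}` to `G_m`:
`a'(e_{xy}) = (1/2)(a(e_{xu}) + a(e_{uy}) + a(e_{xv}) + a(e_{vy}))`. -/
noncomputable def traceForm {m : ℕ} (a : DEdge (m + 1) → ℝ) : DEdge m → ℝ :=
  fun w => (1 / 2) * (a (Fin.snoc w 0) + a (Fin.snoc w 1) - a (Fin.snoc w 2) - a (Fin.snoc w 3))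

/-- A compatible family of 1-forms: flux `±4β_m` through every scale-`m` cell, and each
form traces to the previous one. -/
def Compatible (βs : ℕ → ℝ) (a : (m : ℕ) → DEdge m → ℝ) : Prop :=
  ∀ (k : ℕ) (w : DEdge k),
    (cellFlux (a (k + 1)) w = 4 * βs (k + 1) ∨ cellFlux (a (k + 1)) w = -(4 * βs (k + 1))) ∧
    traceForm (a (k + 1)) w = a k w

/-!
For `z ≠ 1` the eigenvalue equation `M F = z F` at the two new vertices `u, v` of a scale-`m`
cell `x–u–y–v–x` determines `F u` and `F v` from `F x` and `F y` (`cellExt`). Substituted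
into the equation at an old vertex `x`, each cell through `x` contributes the phase
`exp (i (a_xu + a_uy)) + exp (-i (a_yv + a_vx))`, which the flux and trace conditions turn into
`2 cos (2 β_m) exp (i a'_xy)`; the equation at `x` becomes the eigenvalue equation of `D_{m-1}`
at `R_m z`. So eigenfunctions of `D_m` for `z ≠ 1` and of `D_{m-1}` for `R_m z` correspond.
The value `1` is always an eigenvalue: a function supported on the new vertices satisfies the
equation there, and there are more new vertices than equations at interior old vertices.
In `G_1` every old vertex is a boundary vertex, so no `z ≠ 1` survives.
-/

section Combinatorics

variable {n : ℕ}

@[simp] lemma oldV_inj {x y : DVtx n} : oldV x = oldV y ↔ x = y := Sum.inl_injective.eq_iff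

@[simp] lemma newV_inj {p q : DEdge n × Bool} : newV p = newV q ↔ p = q :=
  Sum.inr_injective.eq_iff

@[simp] lemma oldV_ne_newV (x : DVtx n) (p : DEdge n × Bool) : oldV x ≠ newV p := Sum.inl_ne_inr

@[simp] lemma newV_ne_oldV (x : DVtx n) (p : DEdge n × Bool) : newV p ≠ oldV x := Sum.inr_ne_inl

lemma dVtx_succ_cases (v : DVtx (n + 1)) : (∃ x, v = oldV x) ∨ ∃ p, v = newV p := by
  rcases v with x | p
  exacts [.inl ⟨x, rfl⟩, .inr ⟨p, rfl⟩]

lemma base_succ (b : Bool) : base (n + 1) b = oldV (base n b) := rfl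

lemma newV_ne_base (p : DEdge n × Bool) (b : Bool) : newV p ≠ base (n + 1) b := newV_ne_oldV _ _

lemma oldV_ne_base_iff {x : DVtx n} :
    (∀ b, oldV x ≠ base (n + 1) b) ↔ ∀ b, x ≠ base n b := by
  simp [base_succ]

lemma dEnds_snoc (w : DEdge n) (j : Fin 4) :
    dEnds (n + 1) (Fin.snoc w j) =
      if j = 0 then (oldV (dsrc n w), newV (w, false))
      else if j = 1 then (newV (w, false), oldV (dtgt n w))
      else if j = 2 then (oldV (dtgt n w), newV (w, true))
      else (newV (w, true), oldV (dsrc n w)) := by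
  simp only [dEnds, Fin.snoc_castSucc, Fin.snoc_last]
  rfl

@[simp] lemma dsrc_snoc_zero (w : DEdge n) : dsrc (n + 1) (Fin.snoc w 0) = oldV (dsrc n w) := by
  simp [dsrc, dEnds_snoc]
@[simp] lemma dtgt_snoc_zero (w : DEdge n) : dtgt (n + 1) (Fin.snoc w 0) = newV (w, false) := by
  simp [dtgt, dEnds_snoc]
@[simp] lemma dsrc_snoc_one (w : DEdge n) : dsrc (n + 1) (Fin.snoc w 1) = newV (w, false) := by
  simp [dsrc, dEnds_snoc]
@[simp] lemma dtgt_snoc_one (w : DEdge n) : dtgt (n + 1) (Fin.snoc w 1) = oldV (dtgt n w) := by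
  simp [dtgt, dEnds_snoc]
@[simp] lemma dsrc_snoc_two (w : DEdge n) : dsrc (n + 1) (Fin.snoc w 2) = oldV (dtgt n w) := by
  simp [dsrc, dEnds_snoc]
@[simp] lemma dtgt_snoc_two (w : DEdge n) : dtgt (n + 1) (Fin.snoc w 2) = newV (w, true) := by
  simp [dtgt, dEnds_snoc]
@[simp] lemma dsrc_snoc_three (w : DEdge n) : dsrc (n + 1) (Fin.snoc w 3) = newV (w, true) := by
  simp [dsrc, dEnds_snoc]
@[simp] lemma dtgt_snoc_three (w : DEdge n) : dtgt (n + 1) (Fin.snoc w 3) = oldV (dsrc n w) := by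
  simp [dtgt, dEnds_snoc]

lemma sum_dEdge_succ {M : Type*} [AddCommMonoid M] (g : DEdge (n + 1) → M) :
    ∑ e, g e =
      ∑ w, (g (Fin.snoc w 0) + g (Fin.snoc w 1) + g (Fin.snoc w 2) + g (Fin.snoc w 3)) := by
  rw [← (Fin.snocEquiv fun _ => Fin 4).sum_comp, Fintype.sum_prod_type, Finset.sum_comm]
  exact Finset.sum_congr rfl fun w _ => Fin.sum_univ_four _

lemma ddeg_eq_sum (m : ℕ) (x : DVtx m) :
    ddeg m x = ∑ w, ((if dsrc m w = x then 1 else 0) + (if dtgt m w = x then 1 else 0)) := by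
  rw [ddeg, Finset.card_filter, Finset.card_filter, Finset.sum_add_distrib]

lemma ddeg_oldV (x : DVtx n) : ddeg (n + 1) (oldV x) = 2 * ddeg n x := by
  rw [ddeg_eq_sum, ddeg_eq_sum, sum_dEdge_succ, Finset.mul_sum]
  refine Finset.sum_congr rfl fun w _ => ?_
  split_ifs <;> simp_all

lemma ddeg_newV (p : DEdge n × Bool) : ddeg (n + 1) (newV p) = 2 := by
  rw [ddeg_eq_sum, sum_dEdge_succ]
  obtain ⟨w, _ | _⟩ := p <;> simp [Prod.ext_iff, Finset.sum_add_distrib]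

lemma ddeg_pos : ∀ (m : ℕ) (x : DVtx m), 0 < ddeg m x
  | 0, x => by cases x <;> decide
  | _ + 1, Sum.inl x => by
    rw [show Sum.inl x = oldV x from rfl, ddeg_oldV]
    have := ddeg_pos _ x
    omega
  | _ + 1, Sum.inr p => by rw [show Sum.inr p = newV p from rfl, ddeg_newV]; omega

end Combinatorics

section Eigenfunctions

variable {m : ℕ} (a : DEdge m → ℝ)

noncomputable def magOpLin : (DVtx m → ℂ) →ₗ[ℂ] DVtx m → ℂ where
  toFun := magOp m a
  map_add' f g := by
    ext x
    simp only [magOp, Pi.add_apply, ← mul_add, add_add_add_comm, ← Finset.sum_add_distrib]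
    congr 1
    refine Finset.sum_congr rfl fun e _ => ?_
    split_ifs <;> ring
  map_smul' c f := by
    ext x
    simp only [magOp, Pi.smul_apply, smul_eq_mul, RingHom.id_apply, Finset.mul_sum, mul_add]
    congr 1 <;> refine Finset.sum_congr rfl fun e _ => ?_ <;> split_ifs <;> ring

lemma magMat_mulVec (f : DVtx m → ℂ) : (magMat m a).mulVec f = magOp m a f := by
  have : magMat m a = LinearMap.toMatrix' (magOpLin a) := by
    ext x y
    simp only [magMat, Matrix.of_apply, LinearMap.toMatrix'_apply]
    congr 1
    funext v
    exact (Pi.single_apply y 1 v).symm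
  rw [this, LinearMap.toMatrix'_mulVec]
  rfl

def IsDirichletEigenfun (z : ℂ) (F : DVtx m → ℂ) : Prop :=
  F ≠ 0 ∧ (∀ b, F (base m b) = 0) ∧
    ∀ x, (∀ b, x ≠ base m b) → magOp m a F x = z * F x

lemma dirMat_mulVec_restrict {F : DVtx m → ℂ} (hF : ∀ b, F (base m b) = 0)
    (x : {x : DVtx m // ∀ b, x ≠ base m b}) :
    (dirMat m a).mulVec (fun y => F y) x = magOp m a F x := by
  rw [← magMat_mulVec, Matrix.mulVec, Matrix.mulVec, dotProduct, dotProduct,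
    ← Fintype.sum_subtype_add_sum_subtype (fun y => ∀ b, y ≠ base m b), add_eq_left.mpr]
  · rfl
  refine Finset.sum_eq_zero fun y _ => ?_
  obtain ⟨b, hb⟩ := not_forall_not.mp y.2
  rw [hb, hF, mul_zero]

lemma hasEigenvalue_dirMat_iff (z : ℂ) :
    Module.End.HasEigenvalue (Matrix.toLin' (dirMat m a)) z ↔
      ∃ F, IsDirichletEigenfun a z F := by
  simp only [Module.End.hasEigenvalue_iff, Submodule.ne_bot_iff, Module.End.mem_eigenspace_iff,
    Matrix.toLin'_apply]
  constructor
  · rintro ⟨f, hf, hf0⟩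
    let F : DVtx m → ℂ := fun v => if h : ∀ b, v ≠ base m b then f ⟨v, h⟩ else 0
    have hFb : ∀ b, F (base m b) = 0 := fun b => dif_neg (not_forall.mpr ⟨b, not_not.mpr rfl⟩)
    have hfF : (fun y : {x // ∀ b, x ≠ base m b} => F y) = f := funext fun y => dif_pos y.2
    refine ⟨F, fun hF => hf0 ?_, hFb, fun x hx => ?_⟩
    · rw [← hfF, hF]
      rfl
    · have := congrFun hf ⟨x, hx⟩
      rw [← hfF, dirMat_mulVec_restrict a hFb, hfF] at this
      simpa [F, hx] using this
  · rintro ⟨F, hF0, hFb, hFe⟩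
    refine ⟨fun y => F y, funext fun x => ?_, fun hf => hF0 (funext fun v => ?_)⟩
    · rw [dirMat_mulVec_restrict a hFb, hFe x x.2]
      rfl
    · by_cases hv : ∀ b, v ≠ base m b
      · exact congrFun hf ⟨v, hv⟩
      · obtain ⟨b, rfl⟩ := not_forall_not.mp hv
        exact hFb b

end Eigenfunctions

section LocalFormulas

variable {n : ℕ} (A : DEdge (n + 1) → ℝ) (F : DVtx (n + 1) → ℂ)

lemma magOp_newV_false (w : DEdge n) :
    magOp (n + 1) A F (newV (w, false)) = F (newV (w, false)) -
      (exp (-(I * A (Fin.snoc w 0))) * F (oldV (dsrc n w)) +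
        exp (I * A (Fin.snoc w 1)) * F (oldV (dtgt n w))) / 2 := by
  rw [magOp, ddeg_newV, sum_dEdge_succ, sum_dEdge_succ]
  simp only [Nat.cast_ofNat, dsrc_snoc_zero, dsrc_snoc_one, dsrc_snoc_two, dsrc_snoc_three,
    dtgt_snoc_zero, dtgt_snoc_one, dtgt_snoc_two, dtgt_snoc_three, oldV_ne_newV, newV_inj,
    Prod.ext_iff, and_true, and_false, Bool.true_eq_false, if_true, if_false, add_zero, zero_add,
    Finset.sum_ite_eq', Finset.mem_univ]
  ring

lemma magOp_newV_true (w : DEdge n) :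
    magOp (n + 1) A F (newV (w, true)) = F (newV (w, true)) -
      (exp (-(I * A (Fin.snoc w 2))) * F (oldV (dtgt n w)) +
        exp (I * A (Fin.snoc w 3)) * F (oldV (dsrc n w))) / 2 := by
  rw [magOp, ddeg_newV, sum_dEdge_succ, sum_dEdge_succ]
  simp only [Nat.cast_ofNat, dsrc_snoc_zero, dsrc_snoc_one, dsrc_snoc_two, dsrc_snoc_three,
    dtgt_snoc_zero, dtgt_snoc_one, dtgt_snoc_two, dtgt_snoc_three, oldV_ne_newV, newV_inj,
    Prod.ext_iff, and_true, and_false, Bool.false_eq_true, if_true, if_false, add_zero, zero_add,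
    Finset.sum_ite_eq', Finset.mem_univ]
  ring

lemma magOp_oldV (x : DVtx n) :
    magOp (n + 1) A F (oldV x) = (2 * ddeg n x : ℂ)⁻¹ * ∑ w,
      ((if dsrc n w = x then 2 * F (oldV x) - exp (I * A (Fin.snoc w 0)) * F (newV (w, false)) -
          exp (-(I * A (Fin.snoc w 3))) * F (newV (w, true)) else 0) +
        (if dtgt n w = x then 2 * F (oldV x) - exp (-(I * A (Fin.snoc w 1))) * F (newV (w, false)) -
          exp (I * A (Fin.snoc w 2)) * F (newV (w, true)) else 0)) := by
  rw [magOp, ddeg_oldV, sum_dEdge_succ, sum_dEdge_succ, ← Finset.sum_add_distrib]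
  push_cast
  congr 1
  refine Finset.sum_congr rfl fun w _ => ?_
  simp only [dsrc_snoc_zero, dsrc_snoc_one, dsrc_snoc_two, dsrc_snoc_three, dtgt_snoc_zero,
    dtgt_snoc_one, dtgt_snoc_two, dtgt_snoc_three, oldV_inj, newV_ne_oldV, if_false]
  split_ifs <;> ring

end LocalFormulas

section CellPhases

lemma exp_add_exp_neg_eq (p q : ℝ) :
    exp (I * p) + exp (-(I * q)) = 2 * Real.cos ((p + q) / 2) * exp (I * ((p - q) / 2 : ℝ)) := by
  rw [ofReal_cos, cos, mul_div_cancel₀ _ two_ne_zero, add_mul, ← exp_add, ← exp_add]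
  congr 2 <;> push_cast <;> ring

variable {n : ℕ} {A : DEdge (n + 1) → ℝ} {A' : DEdge n → ℝ} {β : ℝ} {w : DEdge n}

lemma cos_half_cellFlux (h : cellFlux A w = 4 * β ∨ cellFlux A w = -(4 * β)) :
    Real.cos (cellFlux A w / 2) = Real.cos (2 * β) := by
  rcases h with h | h
  · rw [h]; ring_nf
  · rw [h, ← Real.cos_neg]; ring_nf

lemma cell_phase_src (hflux : cellFlux A w = 4 * β ∨ cellFlux A w = -(4 * β))
    (htr : traceForm A w = A' w) :
    exp (I * A (Fin.snoc w 0)) * exp (I * A (Fin.snoc w 1)) +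
        exp (-(I * A (Fin.snoc w 2))) * exp (-(I * A (Fin.snoc w 3))) =
      2 * Real.cos (2 * β) * exp (I * A' w) := by
  have h := exp_add_exp_neg_eq (A (Fin.snoc w 0) + A (Fin.snoc w 1))
    (A (Fin.snoc w 2) + A (Fin.snoc w 3))
  rw [← cos_half_cellFlux hflux, ← htr, cellFlux, traceForm, ← exp_add, ← exp_add]
  convert h using 4 <;> push_cast <;> ring_nf

lemma cell_phase_tgt (hflux : cellFlux A w = 4 * β ∨ cellFlux A w = -(4 * β))
    (htr : traceForm A w = A' w) :
    exp (-(I * A (Fin.snoc w 0))) * exp (-(I * A (Fin.snoc w 1))) +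
        exp (I * A (Fin.snoc w 2)) * exp (I * A (Fin.snoc w 3)) =
      2 * Real.cos (2 * β) * exp (-(I * A' w)) := by
  have h := exp_add_exp_neg_eq (-(A (Fin.snoc w 0) + A (Fin.snoc w 1)))
    (-(A (Fin.snoc w 2) + A (Fin.snoc w 3)))
  rw [← cos_half_cellFlux hflux, ← Real.cos_neg, ← htr, cellFlux, traceForm, ← exp_add,
    ← exp_add]
  convert h using 4 <;> push_cast <;> ring_nf

end CellPhases

def ScaleCompatible {n : ℕ} (A : DEdge (n + 1) → ℝ) (A' : DEdge n → ℝ) (β : ℝ) :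
    Prop :=
  ∀ w, (cellFlux A w = 4 * β ∨ cellFlux A w = -(4 * β)) ∧ traceForm A w = A' w

noncomputable def cellExt {n : ℕ} (A : DEdge (n + 1) → ℝ) (z : ℂ) (G : DVtx n → ℂ) :
    DVtx (n + 1) → ℂ :=
  Sum.elim G fun p => (2 * (1 - z))⁻¹ *
    if p.2 then
      exp (-(I * A (Fin.snoc p.1 2))) * G (dtgt n p.1) +
        exp (I * A (Fin.snoc p.1 3)) * G (dsrc n p.1)
    else
      exp (-(I * A (Fin.snoc p.1 0))) * G (dsrc n p.1) +
        exp (I * A (Fin.snoc p.1 1)) * G (dtgt n p.1)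

section Decimation

variable {n : ℕ} {A : DEdge (n + 1) → ℝ} {A' : DEdge n → ℝ} {β : ℝ} {z : ℂ}
  {G : DVtx n → ℂ}

@[simp] lemma cellExt_oldV (x : DVtx n) : cellExt A z G (oldV x) = G x := rfl

lemma cellExt_newV_false (w : DEdge n) : cellExt A z G (newV (w, false)) = (2 * (1 - z))⁻¹ *
    (exp (-(I * A (Fin.snoc w 0))) * G (dsrc n w) + exp (I * A (Fin.snoc w 1)) * G (dtgt n w)) :=
  rfl

lemma cellExt_newV_true (w : DEdge n) : cellExt A z G (newV (w, true)) = (2 * (1 - z))⁻¹ *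
    (exp (-(I * A (Fin.snoc w 2))) * G (dtgt n w) + exp (I * A (Fin.snoc w 3)) * G (dsrc n w)) :=
  rfl

lemma cellExt_zero : cellExt A z 0 = 0 := by
  funext v
  obtain ⟨x, rfl⟩ | ⟨⟨w, _ | _⟩, rfl⟩ := dVtx_succ_cases v <;>
    simp [cellExt_newV_false, cellExt_newV_true]

lemma eq_cellExt_of_magOp_newV {F : DVtx (n + 1) → ℂ} (hz : z ≠ 1)
    (hF : ∀ p, magOp (n + 1) A F (newV p) = z * F (newV p)) :
    F = cellExt A z (fun x => F (oldV x)) := by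
  have h2z : 2 * (1 - z) ≠ 0 := mul_ne_zero two_ne_zero (sub_ne_zero.mpr hz.symm)
  funext v
  obtain ⟨x, rfl⟩ | ⟨⟨w, _ | _⟩, rfl⟩ := dVtx_succ_cases v
  · rfl
  · have := hF (w, false)
    rw [magOp_newV_false] at this
    rw [cellExt_newV_false, inv_mul_eq_div, eq_div_iff h2z]
    linear_combination 2 * this
  · have := hF (w, true)
    rw [magOp_newV_true] at this
    rw [cellExt_newV_true, inv_mul_eq_div, eq_div_iff h2z]
    linear_combination 2 * this

lemma magOp_cellExt_newV (hz : z ≠ 1) (p : DEdge n × Bool) :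
    magOp (n + 1) A (cellExt A z G) (newV p) = z * cellExt A z G (newV p) := by
  have h1z : 1 - z ≠ 0 := sub_ne_zero.mpr hz.symm
  obtain ⟨w, _ | _⟩ := p
  · rw [magOp_newV_false, cellExt_newV_false, cellExt_oldV, cellExt_oldV]
    field_simp
    ring
  · rw [magOp_newV_true, cellExt_newV_true, cellExt_oldV, cellExt_oldV]
    field_simp
    ring

lemma phase_sum_cellExt_dsrc {w : DEdge n}
    (hflux : cellFlux A w = 4 * β ∨ cellFlux A w = -(4 * β)) (htr : traceForm A w = A' w) :
    exp (I * A (Fin.snoc w 0)) * cellExt A z G (newV (w, false)) +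
        exp (-(I * A (Fin.snoc w 3))) * cellExt A z G (newV (w, true)) =
      (2 * (1 - z))⁻¹ *
        (2 * G (dsrc n w) + 2 * Real.cos (2 * β) * exp (I * A' w) * G (dtgt n w)) := by
  have h0 : exp (I * A (Fin.snoc w 0)) * exp (-(I * A (Fin.snoc w 0))) = 1 := by
    rw [← exp_add, add_neg_cancel, exp_zero]
  have h3 : exp (-(I * A (Fin.snoc w 3))) * exp (I * A (Fin.snoc w 3)) = 1 := by
    rw [← exp_add, neg_add_cancel, exp_zero]
  rw [cellExt_newV_false, cellExt_newV_true]
  linear_combination (2 * (1 - z))⁻¹ *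
    (G (dsrc n w) * (h0 + h3) + G (dtgt n w) * cell_phase_src hflux htr)

lemma phase_sum_cellExt_dtgt {w : DEdge n}
    (hflux : cellFlux A w = 4 * β ∨ cellFlux A w = -(4 * β)) (htr : traceForm A w = A' w) :
    exp (-(I * A (Fin.snoc w 1))) * cellExt A z G (newV (w, false)) +
        exp (I * A (Fin.snoc w 2)) * cellExt A z G (newV (w, true)) =
      (2 * (1 - z))⁻¹ *
        (2 * G (dtgt n w) + 2 * Real.cos (2 * β) * exp (-(I * A' w)) * G (dsrc n w)) := by
  have h1 : exp (-(I * A (Fin.snoc w 1))) * exp (I * A (Fin.snoc w 1)) = 1 := by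
    rw [← exp_add, neg_add_cancel, exp_zero]
  have h2 : exp (I * A (Fin.snoc w 2)) * exp (-(I * A (Fin.snoc w 2))) = 1 := by
    rw [← exp_add, add_neg_cancel, exp_zero]
  rw [cellExt_newV_false, cellExt_newV_true]
  linear_combination (2 * (1 - z))⁻¹ *
    (G (dtgt n w) * (h1 + h2) + G (dsrc n w) * cell_phase_tgt hflux htr)

lemma magOp_oldV_cellExt (hA : ScaleCompatible A A' β) (x : DVtx n) :
    magOp (n + 1) A (cellExt A z G) (oldV x) = (1 - (2 * (1 - z))⁻¹) * G x -
      (2 * (1 - z))⁻¹ * Real.cos (2 * β) * (G x - magOp n A' G x) := by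
  set c := (2 * (1 - z))⁻¹
  set C : ℂ := (Real.cos (2 * β) : ℂ)
  have hd : (ddeg n x : ℂ) ≠ 0 := Nat.cast_ne_zero.mpr (ddeg_pos n x).ne'
  have hdeg : (ddeg n x : ℂ) =
      ∑ w, ((if dsrc n w = x then 1 else 0) + (if dtgt n w = x then 1 else 0)) := by
    rw [ddeg_eq_sum]
    push_cast
    rfl
  have hM : (ddeg n x : ℂ) * magOp n A' G x = ∑ w,
      ((if dsrc n w = x then G x - exp (I * A' w) * G (dtgt n w) else 0) +
        (if dtgt n w = x then G x - exp (-(I * A' w)) * G (dsrc n w) else 0)) := by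
    rw [magOp, ← mul_assoc, mul_inv_cancel₀ hd, one_mul, Finset.sum_add_distrib]
  have hcells : ∀ w,
      ((if dsrc n w = x then
          2 * G x - exp (I * A (Fin.snoc w 0)) * cellExt A z G (newV (w, false)) -
            exp (-(I * A (Fin.snoc w 3))) * cellExt A z G (newV (w, true)) else 0) +
        (if dtgt n w = x then
          2 * G x - exp (-(I * A (Fin.snoc w 1))) * cellExt A z G (newV (w, false)) -
            exp (I * A (Fin.snoc w 2)) * cellExt A z G (newV (w, true)) else 0)) =
      ((if dsrc n w = x then 1 else 0) + (if dtgt n w = x then 1 else 0)) *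
          ((2 - 2 * c - 2 * c * C) * G x) +
        2 * c * C * ((if dsrc n w = x then G x - exp (I * A' w) * G (dtgt n w) else 0) +
          (if dtgt n w = x then G x - exp (-(I * A' w)) * G (dsrc n w) else 0)) := by
    intro w
    have hsrc := phase_sum_cellExt_dsrc (z := z) (G := G) (hA w).1 (hA w).2
    have htgt := phase_sum_cellExt_dtgt (z := z) (G := G) (hA w).1 (hA w).2
    split_ifs with hs ht ht
    · rw [hs, ht] at hsrc htgt ⊢
      linear_combination -hsrc - htgt
    · rw [hs] at hsrc
      linear_combination -hsrc
    · rw [ht] at htgt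
      linear_combination -htgt
    · ring
  rw [magOp_oldV, cellExt_oldV, Finset.sum_congr rfl fun w _ => hcells w, Finset.sum_add_distrib,
    ← Finset.sum_mul, ← hdeg, ← Finset.mul_sum, ← hM]
  field_simp
  ring

lemma magOp_oldV_cellExt_eq_iff (hA : ScaleCompatible A A' β) (hβ : Real.cos (2 * β) ≠ 0)
    (hz : z ≠ 1) (x : DVtx n) :
    magOp (n + 1) A (cellExt A z G) (oldV x) = z * G x ↔
      magOp n A' G x = (-2 * z ^ 2 + 4 * z - 1 + Real.cos (2 * β)) / Real.cos (2 * β) * G x := by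
  have hC : (Real.cos (2 * β) : ℂ) ≠ 0 := ofReal_ne_zero.mpr hβ
  have h1z : 1 - z ≠ 0 := sub_ne_zero.mpr hz.symm
  rw [magOp_oldV_cellExt hA]
  field_simp
  constructor <;> intro h <;> linear_combination h

theorem hasEigenvalue_dirMat_succ_iff (hA : ScaleCompatible A A' β)
    (hβ : Real.cos (2 * β) ≠ 0) (hz : z ≠ 1) :
    Module.End.HasEigenvalue (Matrix.toLin' (dirMat (n + 1) A)) z ↔
      Module.End.HasEigenvalue (Matrix.toLin' (dirMat n A'))
        ((-2 * z ^ 2 + 4 * z - 1 + Real.cos (2 * β)) / Real.cos (2 * β)) := by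
  simp only [hasEigenvalue_dirMat_iff]
  constructor
  · rintro ⟨F, hF0, hFb, hFe⟩
    have hFext := eq_cellExt_of_magOp_newV hz fun p => hFe _ (newV_ne_base p)
    refine ⟨fun x => F (oldV x), fun hG => hF0 ?_, hFb, fun x hx => ?_⟩
    · rw [hFext, hG, cellExt_zero]
    · rw [← magOp_oldV_cellExt_eq_iff hA hβ hz, ← hFext]
      exact hFe _ (oldV_ne_base_iff.mpr hx)
  · rintro ⟨G, hG0, hGb, hGe⟩
    refine ⟨cellExt A z G, fun hF => hG0 (funext fun x => congrFun hF (oldV x)), hGb,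
      fun v hv => ?_⟩
    obtain ⟨x, rfl⟩ | ⟨p, rfl⟩ := dVtx_succ_cases v
    · rw [cellExt_oldV, magOp_oldV_cellExt_eq_iff hA hβ hz]
      exact hGe x (oldV_ne_base_iff.mp hv)
    · exact magOp_cellExt_newV hz p

end Decimation

section EigenvalueOne

lemma card_dVtx_le : ∀ n, Fintype.card (DVtx n) ≤ 2 * 4 ^ n
  | 0 => le_rfl
  | n + 1 => by
    change Fintype.card (DVtx n ⊕ (DEdge n × Bool)) ≤ _
    rw [Fintype.card_sum, Fintype.card_prod, Fintype.card_bool, Fintype.card_fun, Fintype.card_fin,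
      Fintype.card_fin, pow_succ]
    linarith [card_dVtx_le n]

lemma card_nonbase_lt (n : ℕ) :
    Fintype.card {x : DVtx n // ∀ b, x ≠ base n b} < Fintype.card (DEdge n × Bool) := by
  calc _ < Fintype.card (DVtx n) := Fintype.card_subtype_lt (x := base n false) (by simp)
    _ ≤ 2 * 4 ^ n := card_dVtx_le n
    _ = _ := by simp [Fintype.card_prod, mul_comm]

lemma hasEigenvalue_one_dirMat_succ {n : ℕ} (A : DEdge (n + 1) → ℝ) :
    Module.End.HasEigenvalue (Matrix.toLin' (dirMat (n + 1) A)) 1 := by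
  let B := (magMat (n + 1) A).submatrix
    (fun x : {x : DVtx n // ∀ b, x ≠ base n b} => oldV x.1) newV
  obtain ⟨h, hBh, hh0⟩ := Submodule.ne_bot_iff _ |>.mp <| LinearMap.ker_ne_bot_of_finrank_lt
    (f := B.mulVecLin) (by simpa only [Module.finrank_fintype_fun_eq_card] using card_nonbase_lt n)
  let F : DVtx (n + 1) → ℂ := Sum.elim 0 h
  refine (hasEigenvalue_dirMat_iff A 1).mpr
    ⟨F, fun hF => hh0 (funext fun p => congrFun hF (newV p)), fun b => rfl, fun v hv => ?_⟩
  obtain ⟨x, rfl⟩ | ⟨⟨w, _ | _⟩, rfl⟩ := dVtx_succ_cases v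
  · have hx : ∀ b, x ≠ base n b := oldV_ne_base_iff.mp hv
    have : ∑ p, magMat (n + 1) A (oldV x) (newV p) * h p = 0 :=
      congrFun (LinearMap.mem_ker.mp hBh) ⟨x, hx⟩
    rw [← magMat_mulVec, Matrix.mulVec, dotProduct]
    change ∑ v : DVtx n ⊕ (DEdge n × Bool), _ = _
    rw [Fintype.sum_sum_type]
    simp only [F, Sum.elim_inl, Sum.elim_inr, Pi.zero_apply, mul_zero, Finset.sum_const_zero,
      zero_add]
    rw [one_mul]
    exact this
  · rw [magOp_newV_false]
    simp [F, oldV, newV]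
  · rw [magOp_newV_true]
    simp [F, oldV, newV]

lemma hasEigenvalue_dirMat_one_iff (A : DEdge 1 → ℝ) (z : ℂ) :
    Module.End.HasEigenvalue (Matrix.toLin' (dirMat 1 A)) z ↔ z = 1 := by
  refine ⟨fun h => by_contra fun hz => ?_, fun hz => hz ▸ hasEigenvalue_one_dirMat_succ A⟩
  obtain ⟨F, hF0, hFb, hFe⟩ := (hasEigenvalue_dirMat_iff A z).mp h
  have hFext := eq_cellExt_of_magOp_newV hz fun p => hFe _ (newV_ne_base p)
  have hG : (fun x => F (oldV x)) = 0 := funext hFb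
  exact hF0 (by rw [hFext, hG, cellExt_zero])

end EigenvalueOne

/-- For `m = k+2 ≥ 2` with `cos 2β_m ≠ 0`, the spectrum of the Dirichlet magnetic
operator `D_m` equals `{1} ∪ R_m⁻¹(spectrum of D_{m−1})`; moreover the spectrum of `D_1`
is `{1}`. -/
theorem stmt11 (βs : ℕ → ℝ) (a : (m : ℕ) → DEdge m → ℝ) (hcomp : Compatible βs a)
    (k : ℕ) (hβ : Real.cos (2 * βs (k + 2)) ≠ 0) :
    {z : ℂ | Module.End.HasEigenvalue (Matrix.toLin' (dirMat (k + 2) (a (k + 2)))) z} =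
      {(1 : ℂ)} ∪
        {z : ℂ | Module.End.HasEigenvalue (Matrix.toLin' (dirMat (k + 1) (a (k + 1))))
          ((-2 * z ^ 2 + 4 * z - 1 + ((Real.cos (2 * βs (k + 2)) : ℝ) : ℂ)) /
            ((Real.cos (2 * βs (k + 2)) : ℝ) : ℂ))} ∧
    {z : ℂ | Module.End.HasEigenvalue (Matrix.toLin' (dirMat 1 (a 1))) z} = {(1 : ℂ)} := by
  refine ⟨Set.ext fun z => ?_, Set.ext fun z => hasEigenvalue_dirMat_one_iff (a 1) z⟩
  by_cases hz : z = 1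
  · subst hz
    exact iff_of_true (hasEigenvalue_one_dirMat_succ _) (Or.inl rfl)
  · rw [Set.mem_union, Set.mem_singleton_iff, or_iff_right hz]
    exact hasEigenvalue_dirMat_succ_iff (hcomp (k + 1)) hβ hz
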